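/- Let D be a 3×3 real symmetric matrix with zero diagonal and entries D_{12}, D_{13}, D_{23}, and assume that at least two of these three entries are nonzero (equivalently, the graph G_D on three vertices is connected). Then the noncommutative distance satisfies d^D(1,2) = sqrt( (D_{13}² + D_{23}²) / (D_{12}²D_{13}² + D_{12}²D_{23}² + D_{23}²D_{13}²) ). -/

import Mathlib

/-!
The commutator `[D, π(a)]` is the antisymmetric matrix with entries `D i j * (a j - a i)`, and a
`3 × 3` antisymmetric matrix acts as a cross product `w ↦ n × w`, whose operator norm is `‖n‖`.
So `d^D(1, 2)` is the largest `|u|` with `d₁₂²|u|² + d₁₃²|v|² + d₂₃²|v - u|² ≤ 1`, where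
`u = a₂ - a₁`, `v = a₃ - a₁`. The triangle inequality `|u| ≤ |v| + |v - u|` and Cauchy–Schwarz
bound `|u|` by the claimed value, and a real `a` for which Cauchy–Schwarz is tight attains it.
-/

open scoped ENNReal

/-- The operator norm on square matrices induced by the Euclidean (ℓ²) norm. -/
noncomputable def opNorm {ι : Type*} [Finite ι] (M : Matrix ι ι ℂ) : ℝ :=
  letI := Fintype.ofFinite ι
  letI := Classical.decEq ι
  ‖Matrix.toEuclideanCLM (𝕜 := ℂ) M‖

/-- The commutator `[D, π(a)]` of a matrix with the diagonal matrix of `a`. -/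
noncomputable def commD {ι : Type*} [Finite ι] (D : Matrix ι ι ℂ) (a : ι → ℂ) : Matrix ι ι ℂ :=
  letI := Fintype.ofFinite ι
  letI := Classical.decEq ι
  D * Matrix.diagonal a - Matrix.diagonal a * D

/-- Connes' noncommutative distance associated to the Dirac operator `D`. -/
noncomputable def ncDist {ι : Type*} [Finite ι] (D : Matrix ι ι ℂ) (i j : ι) : ℝ≥0∞ :=
  ⨆ (a : ι → ℂ) (_ : opNorm (commD D a) ≤ 1), ENNReal.ofReal ‖a i - a j‖

/-- The weight of an edge: the inverse of `|D i j|` (infinite if `D i j = 0`). -/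
noncomputable def eWeight {ι : Type*} (D : Matrix ι ι ℂ) (u v : ι) : ℝ≥0∞ :=
  (ENNReal.ofReal ‖D u v‖)⁻¹

/-- Adjacency in the graph `G_D`. -/
def Adjac {ι : Type*} (D : Matrix ι ι ℂ) (u v : ι) : Prop := u ≠ v ∧ D u v ≠ 0

/-- The length of a walk `i :: p` computed with weights `eWeight D`. -/
noncomputable def walkLength {ι : Type*} (D : Matrix ι ι ℂ) : ι → List ι → ℝ≥0∞
  | _, [] => 0
  | u, v :: rest => eWeight D u v + walkLength D v rest

/-- `i :: p` is a walk from `i` to `j` in the graph `G_D`. -/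
def IsWalk {ι : Type*} (D : Matrix ι ι ℂ) (i j : ι) (p : List ι) : Prop :=
  List.Chain (Adjac D) i p ∧ (i :: p).getLast (List.cons_ne_nil _ _) = j

/-- `i` and `j` lie in the same connected component of `G_D`. -/
def Conn {ι : Type*} (D : Matrix ι ι ℂ) (i j : ι) : Prop := ∃ p, IsWalk D i j p

/-- The geodesic (weighted shortest-path) distance on `G_D`. -/
noncomputable def gDist {ι : Type*} (D : Matrix ι ι ℂ) (i j : ι) : ℝ≥0∞ :=
  ⨅ (p : List ι) (_ : IsWalk D i j p), walkLength D i p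

open Complex ComplexConjugate Matrix WithLp

lemma opNorm_eq_norm_toEuclideanCLM {ι : Type*} [Fintype ι] [DecidableEq ι] (M : Matrix ι ι ℂ) :
    opNorm M = ‖toEuclideanCLM (𝕜 := ℂ) M‖ := by
  unfold opNorm
  convert rfl

lemma commD_apply {ι : Type*} [Finite ι] (D : Matrix ι ι ℂ) (a : ι → ℂ) (i j : ι) :
    commD D a i j = D i j * (a j - a i) := by
  simp only [commD, Matrix.sub_apply, mul_diagonal, diagonal_mul]
  ring

/-- `M w = n × w` for `n = (-z, y, -x)`, so this is Lagrange's identity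
`‖n × w‖² + |⟪n, w⟫|² = ‖n‖² ‖w‖²`. -/
lemma norm_sq_skew_mulVec_add (x y z : ℂ) (w : Fin 3 → ℂ) :
    ‖toLp 2 (!![0, x, y; -x, 0, z; -y, -z, 0] *ᵥ w)‖ ^ 2
        + ‖w ⬝ᵥ ![conj z, -conj y, conj x]‖ ^ 2
      = (‖x‖ ^ 2 + ‖y‖ ^ 2 + ‖z‖ ^ 2) * ‖toLp 2 w‖ ^ 2 := by
  simp only [EuclideanSpace.norm_sq_eq, Fin.sum_univ_three, Complex.sq_norm, mulVec, dotProduct,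
    of_apply, cons_val', cons_val_zero, cons_val_one, cons_val, cons_val_fin_one, Fin.isValue,
    normSq_apply, add_re, add_im, mul_re, mul_im, neg_re, neg_im, conj_re, conj_im, zero_re, zero_im]
  ring

lemma opNorm_skew (x y z : ℂ) :
    opNorm !![0, x, y; -x, 0, z; -y, -z, 0] = √(‖x‖ ^ 2 + ‖y‖ ^ 2 + ‖z‖ ^ 2) := by
  set M : Matrix (Fin 3) (Fin 3) ℂ := !![0, x, y; -x, 0, z; -y, -z, 0]
  set s := ‖x‖ ^ 2 + ‖y‖ ^ 2 + ‖z‖ ^ 2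
  rw [opNorm_eq_norm_toEuclideanCLM]
  apply le_antisymm
  · refine ContinuousLinearMap.opNorm_le_bound _ (Real.sqrt_nonneg _) fun w => ?_
    obtain ⟨w⟩ := w
    have hw := norm_sq_skew_mulVec_add x y z w
    rw [toEuclideanCLM_toLp, ← Real.sqrt_sq (norm_nonneg (toLp 2 w)),
      ← Real.sqrt_mul (by positivity), Real.le_sqrt (norm_nonneg _) (by positivity)]
    linarith [sq_nonneg ‖w ⬝ᵥ ![conj z, -conj y, conj x]‖]
  · obtain ⟨w, hw0, hw⟩ := exists_ne_zero_dotProduct_eq_zero ![conj z, -conj y, conj x]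
    have hMw : ‖toLp 2 (M *ᵥ w)‖ = √s * ‖toLp 2 w‖ := by
      have := norm_sq_skew_mulVec_add x y z w
      rw [hw, norm_zero, zero_pow two_ne_zero, add_zero] at this
      rw [← Real.sqrt_sq (norm_nonneg (toLp 2 (M *ᵥ w))), this, Real.sqrt_mul (by positivity),
        Real.sqrt_sq (norm_nonneg _)]
    have hpos : 0 < ‖toLp 2 w‖ := by simpa using hw0
    refine le_of_mul_le_mul_right ?_ hpos
    rw [← hMw, ← toEuclideanCLM_toLp]
    exact (toEuclideanCLM (𝕜 := ℂ) M).le_opNorm _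

lemma opNorm_commD_fin3 (d12 d13 d23 : ℝ) (a : Fin 3 → ℂ) :
    opNorm (commD !![0, (d12 : ℂ), (d13 : ℂ); (d12 : ℂ), 0, (d23 : ℂ); (d13 : ℂ), (d23 : ℂ), 0] a)
      = √(d12 ^ 2 * ‖a 1 - a 0‖ ^ 2 + d13 ^ 2 * ‖a 2 - a 0‖ ^ 2 + d23 ^ 2 * ‖a 2 - a 1‖ ^ 2) := by
  have hD : commD !![0, (d12 : ℂ), (d13 : ℂ); (d12 : ℂ), 0, (d23 : ℂ); (d13 : ℂ), (d23 : ℂ), 0] a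
      = !![0, d12 * (a 1 - a 0), d13 * (a 2 - a 0);
          -(d12 * (a 1 - a 0)), 0, d23 * (a 2 - a 1);
          -(d13 * (a 2 - a 0)), -(d23 * (a 2 - a 1)), 0] := by
    ext i j
    fin_cases i <;> fin_cases j <;>
      simp only [commD_apply, of_apply, cons_val', cons_val_zero, cons_val_one, cons_val,
        cons_val_fin_one, Fin.isValue, Fin.zero_eta, Fin.mk_one, Fin.reduceFinMk, sub_self,
        mul_zero] <;>
      ring
  simp only [hD, opNorm_skew, norm_mul, mul_pow, norm_real, Real.norm_eq_abs, sq_abs]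

lemma mul_sq_le_of_weighted_sq_le {a b c t p q : ℝ} (ht : 0 ≤ t) (htpq : t ≤ p + q)
    (h : a ^ 2 * t ^ 2 + b ^ 2 * p ^ 2 + c ^ 2 * q ^ 2 ≤ 1) :
    (a ^ 2 * b ^ 2 + a ^ 2 * c ^ 2 + c ^ 2 * b ^ 2) * t ^ 2 ≤ b ^ 2 + c ^ 2 := by
  have hcs : b ^ 2 * c ^ 2 * (p + q) ^ 2 ≤ (b ^ 2 + c ^ 2) * (b ^ 2 * p ^ 2 + c ^ 2 * q ^ 2) := by
    nlinarith [sq_nonneg (b ^ 2 * p - c ^ 2 * q)]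
  have htt : b ^ 2 * c ^ 2 * t ^ 2 ≤ b ^ 2 * c ^ 2 * (p + q) ^ 2 := by
    gcongr
  nlinarith [sq_nonneg b, sq_nonneg c]

lemma weighted_sq_eq_one {a b c R : ℝ} (hS : b ^ 2 + c ^ 2 ≠ 0)
    (hR : R ^ 2 * (a ^ 2 * b ^ 2 + a ^ 2 * c ^ 2 + c ^ 2 * b ^ 2) = b ^ 2 + c ^ 2) :
    a ^ 2 * R ^ 2 + b ^ 2 * (R * c ^ 2 / (b ^ 2 + c ^ 2)) ^ 2
      + c ^ 2 * (R * c ^ 2 / (b ^ 2 + c ^ 2) - R) ^ 2 = 1 := by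
  field_simp
  linear_combination (b ^ 2 + c ^ 2) * hR

theorem stmt7 (d12 d13 d23 : ℝ)
    (h : (d12 ≠ 0 ∧ d13 ≠ 0) ∨ (d12 ≠ 0 ∧ d23 ≠ 0) ∨ (d13 ≠ 0 ∧ d23 ≠ 0)) :
    ncDist !![0, (d12 : ℂ), (d13 : ℂ); (d12 : ℂ), 0, (d23 : ℂ); (d13 : ℂ), (d23 : ℂ), 0] 0 1 =
      ENNReal.ofReal (Real.sqrt ((d13 ^ 2 + d23 ^ 2) /
        (d12 ^ 2 * d13 ^ 2 + d12 ^ 2 * d23 ^ 2 + d23 ^ 2 * d13 ^ 2))) := by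
  set S := d13 ^ 2 + d23 ^ 2
  set Q := d12 ^ 2 * d13 ^ 2 + d12 ^ 2 * d23 ^ 2 + d23 ^ 2 * d13 ^ 2
  have hS : 0 < S := by rcases h with ⟨-, h⟩ | ⟨-, h⟩ | ⟨h, -⟩ <;> positivity
  have hQ : 0 < Q := by rcases h with ⟨h, h'⟩ | ⟨h, h'⟩ | ⟨h, h'⟩ <;> positivity
  refine le_antisymm (iSup₂_le fun a ha => ENNReal.ofReal_le_ofReal ?_) ?_
  · rw [opNorm_commD_fin3, Real.sqrt_le_one] at ha
    rw [Real.le_sqrt (norm_nonneg _) (div_nonneg hS.le hQ.le), le_div_iff₀' hQ, norm_sub_rev]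
    refine mul_sq_le_of_weighted_sq_le (norm_nonneg _) ?_ ha
    rw [add_comm, norm_sub_rev (a 2) (a 1)]
    exact norm_sub_le_norm_sub_add_norm_sub _ _ _
  · -- `a 2` makes `d13² |a 2 - a 0| = d23² |a 2 - a 1|`, the equality case of Cauchy–Schwarz.
    set R := √(S / Q)
    have hR : R ^ 2 * Q = S := by rw [Real.sq_sqrt (by positivity), div_mul_cancel₀ _ hQ.ne']
    refine le_iSup₂_of_le ((↑) ∘ ![0, R, R * d23 ^ 2 / S]) ?_ ?_
    · rw [opNorm_commD_fin3]
      simp only [Function.comp_apply, ← ofReal_sub, norm_real, Real.norm_eq_abs, sq_abs]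
      simpa using (weighted_sq_eq_one hS.ne' hR).le
    · simpa using le_abs_self R
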